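/- Correctness of the SPT construction: for any substitution proof tree T with root labeled (θ, e), the induced proof tree π(T) is a valid proof of θ(e). In particular, at each step, if children SPTs T₁,…,Tₘ prove θᵢ(eᵢ) and δ is a unifier of {θ₁,…,θₘ} with θ₀ = δ ∘ θᵢ, and η unifies the assertion's conclusion/premises with e₀,e₁,…,eₘ, then θ₀ ∘ η witnesses the transition from δ(θ₁(e₁)),…,δ(θₘ(eₘ)) to θ₀(e₀). -/

import Mathlib

/-- First-order terms over variables `V` and function symbols `F`. -/
inductive Term (V F : Type) : Type
  | var : V → Term V F
  | fn  : F → List (Term V F) → Term V F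

/-- Apply a substitution (a map from variables to terms) homomorphically. -/
def Term.subst {V F : Type} (σ : V → Term V F) : Term V F → Term V F
  | .var v => σ v
  | .fn f ts => .fn f (ts.attach.map (fun ⟨t, _⟩ => t.subst σ))
decreasing_by
  simp_wf
  rename_i mem
  have := List.sizeOf_lt_of_mem mem
  omega

/-- The list of variables occurring in a term. -/
def Term.varsList {V F : Type} : Term V F → List V
  | .var v => [v]
  | .fn _ ts => ts.attach.flatMap (fun ⟨t, _⟩ => t.varsList)
decreasing_by
  simp_wf
  rename_i mem
  have := List.sizeOf_lt_of_mem mem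
  omega

/-- Composition of substitutions: `(θ ∘ η)(e) = θ(η(e))`. -/
def Sub.comp {V F : Type} (θ η : V → Term V F) : V → Term V F :=
  fun v => (η v).subst θ

/-- An assertion: premises `p₁, …, pₙ` and a conclusion `p₀`. -/
structure Assertion (V F : Type) where
  premises : List (Term V F)
  conclusion : Term V F

/-- Proof trees: leaves are e-nodes; an inner node is an e-node `e` derived via an
a-node labeled with an assertion and a witnessing substitution from children trees. -/
inductive ProofTree (V F : Type) : Type
  | leaf : Term V F → ProofTree V F
  | node : Term V F → Assertion V F → (V → Term V F) → List (ProofTree V F) → ProofTree V F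

def ProofTree.root {V F : Type} : ProofTree V F → Term V F
  | .leaf e => e
  | .node e _ _ _ => e

/-- Component-wise application of a substitution to a proof tree: it acts on all
expression labels and composes with the witnessing substitutions. -/
def ProofTree.subst {V F : Type} (σ : V → Term V F) : ProofTree V F → ProofTree V F
  | .leaf e => .leaf (e.subst σ)
  | .node e a θ ch => .node (e.subst σ) a (Sub.comp σ θ) (ch.attach.map (fun ⟨t, _⟩ => t.subst σ))
decreasing_by
  simp_wf
  rename_i mem
  have := List.sizeOf_lt_of_mem mem
  omega

def ProofTree.leaves {V F : Type} : ProofTree V F → List (Term V F)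
  | .leaf e => [e]
  | .node _ _ _ ch => ch.attach.flatMap (fun ⟨t, _⟩ => t.leaves)
decreasing_by
  simp_wf
  rename_i mem
  have := List.sizeOf_lt_of_mem mem
  omega

/-- A proof tree is a proof (valid) iff every transition from children `e₁,…,eₘ` via
a-node `(a, θ)` to `e₀` satisfies `θ(a) = (e₁,…,eₘ ⊢ e₀)`. -/
inductive IsProof {V F : Type} : ProofTree V F → Prop
  | leaf (e : Term V F) : IsProof (.leaf e)
  | node (e : Term V F) (a : Assertion V F) (θ : V → Term V F) (ch : List (ProofTree V F)) :
      a.conclusion.subst θ = e →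
      a.premises.map (Term.subst θ) = ch.map ProofTree.root →
      (∀ t ∈ ch, IsProof t) →
      IsProof (.node e a θ ch)

/-- `π` is a proof of the statement `(p₁,…,pₙ ⊢ p₀)`. -/
def ProofOf {V F : Type} (π : ProofTree V F) (prems : List (Term V F)) (goal : Term V F) :
    Prop :=
  IsProof π ∧ π.root = goal ∧ ∀ l ∈ π.leaves, l ∈ prems

/-- Substitution proof trees: a leaf carries a unifier `θ` and an expression `e`; an
inner node carries the unifier `δ` of its children's substitutions, the matching
substitution `η` for the assertion `a`, the expression `e`, and the children SPTs. -/
inductive SPT (V F : Type) : Type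
  | leaf : (V → Term V F) → Term V F → SPT V F
  | node : (V → Term V F) → (V → Term V F) → Term V F → Assertion V F →
      List (SPT V F) → SPT V F

def SPT.rootExpr {V F : Type} : SPT V F → Term V F
  | .leaf _ e => e
  | .node _ _ e _ _ => e

/-- The substitution at the root of an SPT: `θ` at a leaf, `δ ∘ θ₁` at an inner node
(where `θ₁` is the root substitution of the first child), `δ` if there are no premises. -/
def SPT.rootSub {V F : Type} : SPT V F → (V → Term V F)
  | .leaf θ _ => θ
  | .node δ _ _ _ [] => δ
  | .node δ _ _ _ (c :: _) => Sub.comp δ c.rootSub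

/-- The proof tree induced by an SPT: the root expression is instantiated by the root
substitution, the transition is witnessed by `θ₀ ∘ η`, and the unifier `δ` propagates
through the children trees. -/
def SPT.toProof {V F : Type} : SPT V F → ProofTree V F
  | .leaf θ e => .leaf (e.subst θ)
  | .node δ η e a ch =>
      .node (e.subst (SPT.rootSub (.node δ η e a ch))) a
        (Sub.comp (SPT.rootSub (.node δ η e a ch)) η)
        (ch.attach.map (fun ⟨c, _⟩ => (c.toProof).subst δ))
decreasing_by
  simp_wf
  rename_i mem
  have := List.sizeOf_lt_of_mem mem
  omega

/-- Well-formedness of an SPT with respect to the premises of the statement to prove: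
a leaf's expression unifies with a premise; at an inner node the assertion matches the
children's root expressions via `η`, and `δ` unifies the children's substitutions. -/
inductive SPT.WF {V F : Type} (prems : List (Term V F)) : SPT V F → Prop
  | leaf (θ : V → Term V F) (e : Term V F) :
      e.subst θ ∈ prems → SPT.WF prems (.leaf θ e)
  | node (δ η : V → Term V F) (e : Term V F) (a : Assertion V F) (ch : List (SPT V F)) :
      (∀ c ∈ ch, SPT.WF prems c) →
      a.conclusion.subst η = e →
      a.premises.map (Term.subst η) = ch.map SPT.rootExpr →
      (∀ c ∈ ch, ∀ c' ∈ ch, Sub.comp δ c.rootSub = Sub.comp δ c'.rootSub) →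
      SPT.WF prems (.node δ η e a ch)


/-!
Induction on the well-formedness derivation. At an inner node `(δ, η, e, a)` with root
substitution `θ₀`, the unifier `δ` sends every child's root substitution `θᵢ` to `θ₀`
(for the first child by definition of `θ₀`, for the others because `δ` unifies them). So
applying `δ` to the proof tree of the `i`-th child, which is valid by the induction
hypothesis and validity being stable under substitution, yields a valid proof tree with
root `θ₀(eᵢ)`; and `θ₀ ∘ η` instantiates `a` exactly to `θ₀(e₁), …, θ₀(eₘ) ⊢ θ₀(e)`
because `η` instantiates it to `e₁, …, eₘ ⊢ e`.
-/

namespace Term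

variable {V F : Type}

@[simp]
theorem subst_var (σ : V → Term V F) (v : V) : (var v).subst σ = σ v := by
  rw [subst]

@[simp]
theorem subst_fn (σ : V → Term V F) (f : F) (ts : List (Term V F)) :
    (fn f ts).subst σ = fn f (ts.map (subst σ)) := by
  rw [subst]; simp

theorem subst_subst (θ η : V → Term V F) (t : Term V F) :
    (t.subst η).subst θ = t.subst (Sub.comp θ η) := by
  induction t using subst.induct with
  | case1 v => simp [Sub.comp]
  | case2 f ts ih =>
    simp only [subst_fn, List.map_map, fn.injEq, true_and]
    exact List.map_congr_left fun t ht => ih t ht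

theorem subst_comp_subst (θ η : V → Term V F) :
    subst θ ∘ subst η = subst (Sub.comp θ η) :=
  funext (subst_subst θ η)

end Term

namespace ProofTree

variable {V F : Type}

@[simp]
theorem subst_leaf (σ : V → Term V F) (e : Term V F) :
    (leaf e).subst σ = leaf (e.subst σ) := by
  rw [subst]

@[simp]
theorem subst_node (σ : V → Term V F) (e : Term V F) (a : Assertion V F)
    (θ : V → Term V F) (ch : List (ProofTree V F)) :
    (node e a θ ch).subst σ = node (e.subst σ) a (Sub.comp σ θ) (ch.map (subst σ)) := by
  rw [subst]; simp

theorem root_subst (σ : V → Term V F) (π : ProofTree V F) :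
    (π.subst σ).root = π.root.subst σ := by
  cases π <;> simp [root]

end ProofTree

theorem IsProof.subst {V F : Type} (σ : V → Term V F) {π : ProofTree V F}
    (h : IsProof π) : IsProof (π.subst σ) := by
  induction h with
  | leaf e => simpa using IsProof.leaf _
  | node e a θ ch hconc hprem _ ih =>
    rw [ProofTree.subst_node]
    refine IsProof.node _ _ _ _ ?_ ?_ ?_
    · rw [← Term.subst_subst, hconc]
    · rw [← Term.subst_comp_subst, ← List.map_map, hprem, List.map_map, List.map_map]
      exact List.map_congr_left fun t _ => (ProofTree.root_subst σ t).symm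
    · simpa using ih

namespace SPT

variable {V F : Type}

@[simp]
theorem toProof_leaf (θ : V → Term V F) (e : Term V F) :
    (leaf θ e).toProof = .leaf (e.subst θ) := by
  rw [toProof]

@[simp]
theorem toProof_node (δ η : V → Term V F) (e : Term V F) (a : Assertion V F)
    (ch : List (SPT V F)) :
    (node δ η e a ch).toProof =
      .node (e.subst (node δ η e a ch).rootSub) a (Sub.comp (node δ η e a ch).rootSub η)
        (ch.map fun c => c.toProof.subst δ) := by
  rw [toProof]; simp

theorem root_toProof (T : SPT V F) : T.toProof.root = T.rootExpr.subst T.rootSub := by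
  cases T <;> simp [ProofTree.root, rootExpr, rootSub]

theorem comp_rootSub_eq_rootSub_node {δ η : V → Term V F} {e : Term V F}
    {a : Assertion V F} {ch : List (SPT V F)}
    (huni : ∀ c ∈ ch, ∀ c' ∈ ch, Sub.comp δ c.rootSub = Sub.comp δ c'.rootSub)
    {c : SPT V F} (hc : c ∈ ch) :
    Sub.comp δ c.rootSub = (node δ η e a ch).rootSub := by
  cases ch with
  | nil => cases hc
  | cons c₁ _ => exact huni c hc c₁ List.mem_cons_self

theorem isProof_toProof {prems : List (Term V F)} {T : SPT V F} (h : T.WF prems) :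
    IsProof T.toProof := by
  induction h with
  | leaf θ e _ => simpa using IsProof.leaf _
  | node δ η e a ch _ hconc hprem huni ih =>
    rw [toProof_node]
    refine IsProof.node _ _ _ _ ?_ ?_ ?_
    · rw [← Term.subst_subst, hconc]
    · rw [← Term.subst_comp_subst, ← List.map_map, hprem, List.map_map, List.map_map]
      refine List.map_congr_left fun c hc => ?_
      rw [Function.comp_apply, Function.comp_apply, ProofTree.root_subst, root_toProof,
        Term.subst_subst, comp_rootSub_eq_rootSub_node (η := η) (e := e) (a := a) huni hc]
    · simpa using fun c hc => (ih c hc).subst δ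

end SPT

/-- Correctness of the SPT construction: for any well-formed substitution proof tree `T`
with root `(θ, e)`, the induced proof tree `π(T)` is a valid proof whose root is `θ(e)`. -/
theorem spt_correctness {V F : Type} (prems : List (Term V F)) (T : SPT V F)
    (h : SPT.WF prems T) :
    IsProof T.toProof ∧ T.toProof.root = T.rootExpr.subst T.rootSub :=
  ⟨SPT.isProof_toProof h, SPT.root_toProof T⟩
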